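/- Suppose Q̂, A ∈ R^{n×m} with σ_min(A) ≥ (1 − δ/11)/√(1+ε_H), σ_max(A) ≤ 12/(11√(1−ε_L)), ‖Q̂ − A‖₂ ≤ 6δ/(55√(1−ε_L)), and ‖Q̂‖₂ ≤ 6/(5√(1−ε_L)), with δ ∈ [0,1], ε_L ∈ [0, 616/625 − (9/625)ε_H), ε_H ≥ 0. Then the condition number of Q̂ satisfies κ(Q̂) ≤ 33/(25√((1−ε_L)/(1+ε_H)) − 3). -/

import Mathlib

open Matrix
open scoped BigOperators

/-- Euclidean norm of a vector in `Fin k → ℝ`. -/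
noncomputable def enorm {k : ℕ} (x : Fin k → ℝ) : ℝ := Real.sqrt (∑ i, x i ^ 2)

/-- Largest singular value (spectral norm): sup of `‖A x‖₂` over unit vectors. -/
noncomputable def sigmaMax {n m : ℕ} (A : Matrix (Fin n) (Fin m) ℝ) : ℝ :=
  ⨆ x : {x : Fin m → ℝ // _root_.enorm x = 1}, _root_.enorm (A.mulVec x)

/-- Smallest singular value: inf of `‖A x‖₂` over unit vectors. -/
noncomputable def sigmaMin {n m : ℕ} (A : Matrix (Fin n) (Fin m) ℝ) : ℝ :=
  ⨅ x : {x : Fin m → ℝ // _root_.enorm x = 1}, _root_.enorm (A.mulVec x)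

/-- Frobenius norm. -/
noncomputable def frobNorm {n m : ℕ} (A : Matrix (Fin n) (Fin m) ℝ) : ℝ :=
  Real.sqrt (∑ i, ∑ j, A i j ^ 2)

/-- Condition number `σ_max / σ_min`. -/
noncomputable def kappa {n m : ℕ} (A : Matrix (Fin n) (Fin m) ℝ) : ℝ :=
  sigmaMax A / sigmaMin A

/-!
Weyl's inequality for the smallest singular value gives
`σ_min(Q̂) ≥ σ_min(A) - ‖Q̂ - A‖₂ ≥ (1 - δ/11)/√(1+ε_H) - 6δ/(55√(1-ε_L))`, and dividing the bound
on `σ_max(Q̂)` by this lower bound gives the claim. Writing `s = √(1-ε_L)`, `t = √(1+ε_H)`, the final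
estimate rests on the identity
`33 ((1 - δ/11)/t - 6δ/(55 s)) = 6/(5s) (25 s/t - 3) + (1 - δ)(3/t + 18/(5s))`,
whose last term is nonnegative because `δ ≤ 1`; the hypothesis on `ε_L, ε_H` is `3t < 25s`.
-/

lemma enorm_eq_norm_toLp {k : ℕ} (x : Fin k → ℝ) :
    _root_.enorm x = ‖WithLp.toLp 2 x‖ := by
  simp [_root_.enorm, EuclideanSpace.norm_eq, Real.norm_eq_abs, sq_abs]

lemma enorm_le_enorm_add_enorm_sub {k : ℕ} (x y : Fin k → ℝ) :
    _root_.enorm y ≤ _root_.enorm x + _root_.enorm (x - y) := by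
  simp only [enorm_eq_norm_toLp, WithLp.toLp_sub]
  exact norm_le_norm_add_norm_sub _ _

namespace Matrix

variable {n m : ℕ}

lemma enorm_mulVec_le_frobNorm_mul (B : Matrix (Fin n) (Fin m) ℝ) (x : Fin m → ℝ) :
    _root_.enorm (B *ᵥ x) ≤ frobNorm B * _root_.enorm x := by
  rw [_root_.enorm, _root_.enorm, frobNorm, ← Real.sqrt_mul (by positivity)]
  refine Real.sqrt_le_sqrt ?_
  rw [Finset.sum_mul]
  exact Finset.sum_le_sum fun i _ => Finset.sum_mul_sq_le_sq_mul_sq Finset.univ (B i) x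

lemma enorm_mulVec_le_sigmaMax (B : Matrix (Fin n) (Fin m) ℝ) {x : Fin m → ℝ}
    (hx : _root_.enorm x = 1) : _root_.enorm (B *ᵥ x) ≤ sigmaMax B := by
  refine le_ciSup (f := fun x : {x : Fin m → ℝ // _root_.enorm x = 1} => _root_.enorm (B *ᵥ x))
    ⟨frobNorm B, ?_⟩ ⟨x, hx⟩
  rintro _ ⟨y, rfl⟩
  simpa [y.2] using enorm_mulVec_le_frobNorm_mul B y.1

lemma sigmaMin_le_enorm_mulVec (B : Matrix (Fin n) (Fin m) ℝ) {x : Fin m → ℝ}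
    (hx : _root_.enorm x = 1) : sigmaMin B ≤ _root_.enorm (B *ᵥ x) := by
  refine ciInf_le (f := fun x : {x : Fin m → ℝ // _root_.enorm x = 1} => _root_.enorm (B *ᵥ x))
    ⟨0, ?_⟩ ⟨x, hx⟩
  rintro _ ⟨y, rfl⟩
  exact Real.sqrt_nonneg _

lemma sigmaMax_nonneg (B : Matrix (Fin n) (Fin m) ℝ) : 0 ≤ sigmaMax B :=
  Real.iSup_nonneg fun _ => Real.sqrt_nonneg _

/-- Weyl's inequality for the smallest singular value. -/
lemma sigmaMin_sub_sigmaMax_sub_le_sigmaMin (A Q : Matrix (Fin n) (Fin m) ℝ) :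
    sigmaMin A - sigmaMax (Q - A) ≤ sigmaMin Q := by
  rcases isEmpty_or_nonempty {x : Fin m → ℝ // _root_.enorm x = 1} with hE | hne
  · simp [sigmaMin, sigmaMax, Real.iInf_of_isEmpty, Real.iSup_of_isEmpty]
  · refine le_ciInf fun x => ?_
    have hA := sigmaMin_le_enorm_mulVec A x.2
    have hQA := enorm_mulVec_le_sigmaMax (Q - A) x.2
    have htri := enorm_le_enorm_add_enorm_sub (Q *ᵥ x.1) (A *ᵥ x.1)
    rw [← sub_mulVec] at htri
    linarith

lemma kappa_le_div {Q : Matrix (Fin n) (Fin m) ℝ} {a b : ℝ} (ha : sigmaMax Q ≤ a)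
    (hb : 0 < b) (hbQ : b ≤ sigmaMin Q) : kappa Q ≤ a / b :=
  div_le_div₀ ((sigmaMax_nonneg Q).trans ha) ha hb hbQ

end Matrix

lemma perturbed_lower_bound_pos_and_div_le {s t δ : ℝ} (hs : 0 < s) (ht : 0 < t)
    (hst : 3 * t < 25 * s) (hδ : δ ≤ 1) :
    0 < (1 - δ / 11) / t - 6 * δ / (55 * s) ∧
      6 / (5 * s) / ((1 - δ / 11) / t - 6 * δ / (55 * s)) ≤ 33 / (25 * (s / t) - 3) := by
  have hD : 0 < 25 * (s / t) - 3 := by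
    rw [sub_pos, mul_div_assoc', lt_div_iff₀ ht]
    linarith
  have hrest : 0 ≤ (1 - δ) * (3 / t + 18 / (5 * s)) := by
    have : 0 ≤ 1 - δ := by linarith
    positivity
  have key : 33 * ((1 - δ / 11) / t - 6 * δ / (55 * s)) =
      6 / (5 * s) * (25 * (s / t) - 3) + (1 - δ) * (3 / t + 18 / (5 * s)) := by
    field_simp
    ring
  have hL : 0 < (1 - δ / 11) / t - 6 * δ / (55 * s) := by
    have : 0 < 6 / (5 * s) * (25 * (s / t) - 3) := by positivity
    linarith
  refine ⟨hL, ?_⟩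
  rw [div_le_div_iff₀ hL hD]
  linarith

theorem stmt16_general {n m : ℕ} (Q A : Matrix (Fin n) (Fin m) ℝ)
    (δ εL εH : ℝ) (hδ1 : δ ≤ 1)
    (hH0 : 0 ≤ εH) (hL1 : εL < 616 / 625 - 9 / 625 * εH)
    (hAmin : (1 - δ / 11) / Real.sqrt (1 + εH) ≤ sigmaMin A)
    (hdiff : sigmaMax (Q - A) ≤ 6 * δ / (55 * Real.sqrt (1 - εL)))
    (hQmax : sigmaMax Q ≤ 6 / (5 * Real.sqrt (1 - εL))) :
    kappa Q ≤ 33 / (25 * Real.sqrt ((1 - εL) / (1 + εH)) - 3) := by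
  have hsL : 0 < 1 - εL := by linarith
  have htL : 0 < 1 + εH := by linarith
  have hs := Real.sqrt_pos.2 hsL
  have ht := Real.sqrt_pos.2 htL
  have hst : 3 * Real.sqrt (1 + εH) < 25 * Real.sqrt (1 - εL) := by
    refine lt_of_pow_lt_pow_left₀ 2 (by positivity) ?_
    rw [mul_pow, mul_pow, Real.sq_sqrt htL.le, Real.sq_sqrt hsL.le]
    linarith
  obtain ⟨hL, hbound⟩ := perturbed_lower_bound_pos_and_div_le hs ht hst hδ1
  have hQmin := (sub_le_sub hAmin hdiff).trans (sigmaMin_sub_sigmaMax_sub_le_sigmaMin A Q)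
  rw [Real.sqrt_div hsL.le]
  exact (kappa_le_div hQmax hL hQmin).trans hbound

theorem stmt16 {n m : ℕ} (Q A : Matrix (Fin n) (Fin m) ℝ)
    (hQrank : Q.rank = m) (hArank : A.rank = m)
    (δ εL εH : ℝ) (hδ0 : 0 ≤ δ) (hδ1 : δ ≤ 1)
    (hH0 : 0 ≤ εH) (hL0 : 0 ≤ εL) (hL1 : εL < 616 / 625 - 9 / 625 * εH)
    (hAmin : (1 - δ / 11) / Real.sqrt (1 + εH) ≤ sigmaMin A)
    (hAmax : sigmaMax A ≤ 12 / (11 * Real.sqrt (1 - εL)))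
    (hdiff : sigmaMax (Q - A) ≤ 6 * δ / (55 * Real.sqrt (1 - εL)))
    (hQmax : sigmaMax Q ≤ 6 / (5 * Real.sqrt (1 - εL))) :
    kappa Q ≤ 33 / (25 * Real.sqrt ((1 - εL) / (1 + εH)) - 3) :=
  stmt16_general Q A δ εL εH hδ1 hH0 hL1 hAmin hdiff hQmax
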